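/- Let A : ℝ → [0,1] satisfy: A(x) = 1 on a nonempty closed interval [a,b]; A = l on (-∞, a) where l is nondecreasing, right-continuous, and vanishes below some w₁ < a; A = r on (b, ∞) where r is nonincreasing, left-continuous, and vanishes above some w₂ > b. Then A is normal, fuzzy-convex (all α-cuts are intervals), upper semicontinuous, and has bounded support. -/

import Mathlib

open Topology Filter Set

/-! `A` increases up to the plateau `[a, b]` of maximal values and decreases after it, so its
superlevel sets are intervals. Upper semicontinuity at a point splits into its two sides: on the
side from which `A` increases towards the point, the value there is a maximum, and on the other
side the one-sided continuity of `l` or `r` applies. -/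

section Quasiconcave

variable {𝕜 β : Type*} [Field 𝕜] [LinearOrder 𝕜] [IsStrictOrderedRing 𝕜] [Preorder β]

theorem quasiconcaveOn_univ_of_monotoneOn_of_antitoneOn {f : 𝕜 → β} {a b : 𝕜}
    (hmono : MonotoneOn f (Iic a)) (hanti : AntitoneOn f (Ici b))
    (hmax : ∀ z ∈ Ioo a b, IsMaxOn f univ z) : QuasiconcaveOn 𝕜 univ f := by
  intro c
  rw [convex_iff_ordConnected]
  refine ⟨fun x hx y hy z hz => ⟨mem_univ z, ?_⟩⟩
  rcases le_or_gt z a with hza | haz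
  · exact hx.2.trans (hmono (hz.1.trans hza) hza hz.1)
  rcases le_or_gt b z with hbz | hzb
  · exact hy.2.trans (hanti hbz (hbz.trans hz.2) hz.2)
  · exact hx.2.trans (hmax z ⟨haz, hzb⟩ (mem_univ x))

end Quasiconcave

section Monotone

variable {α β : Type*} [LinearOrder α] [Preorder β] {f : α → β} {a : α}

theorem MonotoneOn.Iic_of_isMaxOn (hf : MonotoneOn f (Iio a)) (ha : IsMaxOn f (Iio a) a) :
    MonotoneOn f (Iic a) := by
  rw [← Iio_insert]
  exact monotoneOn_insert_iff.2
    ⟨fun _ hb _ => ha hb, fun _ hb hab => absurd hb (not_lt.2 hab), hf⟩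

theorem AntitoneOn.Ici_of_isMaxOn (hf : AntitoneOn f (Ioi a)) (ha : IsMaxOn f (Ioi a) a) :
    AntitoneOn f (Ici a) := by
  rw [← Ioi_insert]
  exact antitoneOn_insert_iff.2
    ⟨fun _ hb hab => absurd hb (not_lt.2 hab), fun _ hb _ => ha hb, hf⟩

end Monotone

section Semicontinuity

variable {α β : Type*} [TopologicalSpace α] [Preorder β] {f : α → β} {s t : Set α} {x : α}

theorem IsMaxOn.upperSemicontinuousWithinAt (h : IsMaxOn f s x) :
    UpperSemicontinuousWithinAt f s x := fun _ hy =>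
  eventually_nhdsWithin_of_forall fun _ hx' => (h hx').trans_lt hy

theorem UpperSemicontinuousWithinAt.union (hs : UpperSemicontinuousWithinAt f s x)
    (ht : UpperSemicontinuousWithinAt f t x) : UpperSemicontinuousWithinAt f (s ∪ t) x :=
  fun y hy => by
    rw [upperSemicontinuousWithinAt_iff] at hs ht
    rw [nhdsWithin_union]
    exact eventually_sup.2 ⟨hs y hy, ht y hy⟩

end Semicontinuity

section OneSided

variable {α β : Type*} [TopologicalSpace α] [LinearOrder α]
  [TopologicalSpace β] [LinearOrder β] [OrderTopology β] {f : α → β} {x : α}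

theorem upperSemicontinuousAt_of_isMaxOn_Iic_of_continuousWithinAt_Ici
    (hmax : IsMaxOn f (Iic x) x) (hcont : ContinuousWithinAt f (Ici x) x) :
    UpperSemicontinuousAt f x := by
  rw [← upperSemicontinuousWithinAt_univ_iff, ← Iic_union_Ici (a := x)]
  exact hmax.upperSemicontinuousWithinAt.union hcont.upperSemicontinuousWithinAt

theorem upperSemicontinuousAt_of_isMaxOn_Ici_of_continuousWithinAt_Iic
    (hmax : IsMaxOn f (Ici x) x) (hcont : ContinuousWithinAt f (Iic x) x) :
    UpperSemicontinuousAt f x := by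
  rw [← upperSemicontinuousWithinAt_univ_iff, ← Iic_union_Ici (a := x)]
  exact hcont.upperSemicontinuousWithinAt.union hmax.upperSemicontinuousWithinAt

end OneSided

/-- If A : ℝ → [0,1] equals 1 on [a,b], equals a nondecreasing right-continuous l
vanishing below w₁ < a on (-∞,a), and a nonincreasing left-continuous r vanishing
above w₂ > b on (b,∞), then A is normal, fuzzy-convex (all α-cuts convex),
upper semicontinuous, and has bounded support. -/
theorem fuzzy_number_characterization_forward (A l r : ℝ → ℝ) (a b w₁ w₂ : ℝ)
    (hab : a ≤ b) (hA01 : ∀ x, A x ∈ Set.Icc (0:ℝ) 1)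
    (hAcore : ∀ x ∈ Set.Icc a b, A x = 1)
    (hAl : ∀ x, x < a → A x = l x)
    (hlmono : MonotoneOn l (Set.Iio a))
    (hlrc : ∀ x ∈ Set.Iio a, ContinuousWithinAt l (Set.Ici x) x)
    (hw₁ : w₁ < a) (hl0 : ∀ x, x < w₁ → l x = 0)
    (hAr : ∀ x, b < x → A x = r x)
    (hrmono : AntitoneOn r (Set.Ioi b))
    (hrlc : ∀ x ∈ Set.Ioi b, ContinuousWithinAt r (Set.Iic x) x)
    (hw₂ : b < w₂) (hr0 : ∀ x, w₂ < x → r x = 0) :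
    (∃ x : ℝ, A x = 1) ∧
    (∀ α ∈ Set.Ioc (0:ℝ) 1, Convex ℝ {x : ℝ | α ≤ A x}) ∧
    UpperSemicontinuous A ∧
    Bornology.IsBounded {x : ℝ | 0 < A x} := by
  have hmax : ∀ z ∈ Icc a b, IsMaxOn A univ z := fun z hz x _ => by
    rw [hAcore z hz]; exact (hA01 x).2
  have hmono : MonotoneOn A (Iic a) :=
    (hlmono.congr fun x hx => (hAl x hx).symm).Iic_of_isMaxOn
      fun x _ => hmax a ⟨le_rfl, hab⟩ (mem_univ x)
  have hanti : AntitoneOn A (Ici b) :=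
    (hrmono.congr fun x hx => (hAr x hx).symm).Ici_of_isMaxOn
      fun x _ => hmax b ⟨hab, le_rfl⟩ (mem_univ x)
  refine ⟨⟨a, hAcore a ⟨le_rfl, hab⟩⟩, fun α _ => ?_, fun x₀ => ?_, ?_⟩
  · simpa only [mem_univ, true_and] using
      quasiconcaveOn_univ_of_monotoneOn_of_antitoneOn hmono hanti
        (fun z hz => hmax z (Ioo_subset_Icc_self hz)) α
  · rcases lt_or_ge x₀ a with hx₀a | hax₀
    · refine upperSemicontinuousAt_of_isMaxOn_Iic_of_continuousWithinAt_Ici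
        (fun x hx => hmono (hx.trans hx₀a.le) hx₀a.le hx) ?_
      exact (hlrc x₀ hx₀a).congr_of_eventuallyEq
        (eventually_nhdsWithin_of_eventually_nhds (mem_of_superset (Iio_mem_nhds hx₀a) hAl))
        (hAl x₀ hx₀a)
    rcases le_or_gt x₀ b with hx₀b | hbx₀
    · exact upperSemicontinuousWithinAt_univ_iff.1
        (hmax x₀ ⟨hax₀, hx₀b⟩).upperSemicontinuousWithinAt
    · refine upperSemicontinuousAt_of_isMaxOn_Ici_of_continuousWithinAt_Iic
        (fun x hx => hanti hbx₀.le (hbx₀.le.trans hx) hx) ?_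
      exact (hrlc x₀ hbx₀).congr_of_eventuallyEq
        (eventually_nhdsWithin_of_eventually_nhds (mem_of_superset (Ioi_mem_nhds hbx₀) hAr))
        (hAr x₀ hbx₀)
  · refine (Metric.isBounded_Icc w₁ w₂).subset fun x hx =>
      ⟨not_lt.1 fun hxw => ?_, not_lt.1 fun hxw => ?_⟩
    · exact hx.ne' ((hAl x (hxw.trans hw₁)).trans (hl0 x hxw))
    · exact hx.ne' ((hAr x (hw₂.trans hxw)).trans (hr0 x hxw))
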